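/- arXiv:1312.5037 — 2 statements merged into one kernel-verified Lean document; each statement's English description precedes it below -/
import Mathlib

section
/- Let C and D be monoidal categories, A a Schrödinger object for C, and F: C → D a monoidal equivalence. Then Z(F)(A) is a Schrödinger object for D, where Z(F): Z(C) → Z(D) is the braided monoidal equivalence induced by F on the Drinfel'd centers. -/
/-!
Naturally in `X : Z(D)`, writing `Z(F)⁻¹` for an inverse of `Z(F)`,
`Hom(X, Z(F) A) ≃ Hom(Z(F)⁻¹ X, A) ≃ Hom(Π Z(F)⁻¹ X, 𝟙) ≃ Hom(F Π Z(F)⁻¹ X, F 𝟙) ≃ Hom(Π X, 𝟙)`,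
using the adjunction `Z(F)⁻¹ ⊣ Z(F)`, the Schrödinger property of `A`, full faithfulness of `F`,
and finally `F Π ≅ Π Z(F)`, the counit `Z(F) Z(F)⁻¹ ≅ 𝟭` and `F 𝟙 ≅ 𝟙`.
-/

open CategoryTheory MonoidalCategory

universe v u v' u'

variable {C : Type u} [Category.{v} C] [MonoidalCategory C]

/-- An object `A` of the Drinfel'd center `Z(C)` is a *Schrödinger object* for the monoidal
category `C` if the functor `Hom_C(Π(−), 𝟙) : Z(C)ᵒᵖ ⥤ Type` is representable by `A`. -/
def IsSchrodingerObject (A : Center C) : Prop :=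
  Nonempty ((Center.forget C).op ⋙ yoneda.obj (𝟙_ C) ≅ yoneda.obj A)

namespace CategoryTheory

variable {𝒜 ℬ ℰ : Type*} [Category 𝒜] [Category ℬ] [Category ℰ]

def opCompYonedaObjIso {P Q : ℰ ⥤ 𝒜} (α : P ≅ Q) {Y Y' : 𝒜} (ε : Y ≅ Y') :
    P.op ⋙ yoneda.obj Y ≅ Q.op ⋙ yoneda.obj Y' :=
  Functor.isoWhiskerRight (NatIso.op α.symm) _ ≪≫ Functor.isoWhiskerLeft _ (yoneda.mapIso ε)

namespace Functor.RepresentableBy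

def ofFullyFaithful {P : ℰ ⥤ 𝒜} {Y : 𝒜} {A : ℰ} (R : (P.op ⋙ yoneda.obj Y).RepresentableBy A)
    {F : 𝒜 ⥤ ℬ} (hF : F.FullyFaithful) :
    ((P ⋙ F).op ⋙ yoneda.obj (F.obj Y)).RepresentableBy A where
  homEquiv := R.homEquiv.trans hF.homEquiv
  homEquiv_comp f g := by simp [R.homEquiv_comp]

def ofEquivalence {Φ : 𝒜ᵒᵖ ⥤ Type*} {A : 𝒜} (R : Φ.RepresentableBy A) (e : 𝒜 ≌ ℬ) :
    (e.inverse.op ⋙ Φ).RepresentableBy (e.functor.obj A) where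
  homEquiv := (e.symm.toAdjunction.homEquiv _ A).symm.trans R.homEquiv
  homEquiv_comp f g := by simp [Adjunction.homEquiv_naturality_left_symm, R.homEquiv_comp]

end Functor.RepresentableBy

end CategoryTheory

theorem IsSchrodingerObject.map {D : Type u'} [Category.{v'} D] [MonoidalCategory D]
    {F : C ⥤ D} (hF : F.FullyFaithful) (ε : 𝟙_ D ≅ F.obj (𝟙_ C)) (e : Center C ≌ Center D)
    (α : e.functor ⋙ Center.forget D ≅ Center.forget C ⋙ F) {A : Center C}
    (hA : IsSchrodingerObject A) : IsSchrodingerObject (e.functor.obj A) := by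
  obtain ⟨i⟩ := hA
  let R : ((Center.forget C).op ⋙ yoneda.obj (𝟙_ C)).RepresentableBy A :=
    Functor.representableByEquiv.symm i.symm
  let R' : (((e.inverse ⋙ e.functor) ⋙ Center.forget D).op ⋙ yoneda.obj (𝟙_ D)).RepresentableBy
      (e.functor.obj A) :=
    ((R.ofFullyFaithful hF).ofIso (opCompYonedaObjIso α.symm ε.symm)).ofEquivalence e
  let counit : (e.inverse ⋙ e.functor) ⋙ Center.forget D ≅ Center.forget D :=
    Functor.isoWhiskerRight e.counitIso _ ≪≫ Functor.leftUnitor _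
  exact ⟨(Functor.representableByEquiv (R'.ofIso (opCompYonedaObjIso counit (Iso.refl _)))).symm⟩

theorem isSchrodingerObject_of_monoidalEquivalence_general
    {D : Type u'} [Category.{v'} D] [MonoidalCategory D]
    (F : C ⥤ D) [F.Monoidal] [F.IsEquivalence]
    (ZF : Center C ⥤ Center D) [ZF.IsEquivalence]
    (hZF : ZF ⋙ Center.forget D = Center.forget C ⋙ F)
    (A : Center C) (hA : IsSchrodingerObject A) :
    IsSchrodingerObject (ZF.obj A) :=
  hA.map (.ofFullyFaithful F) (Functor.Monoidal.εIso F) ZF.asEquivalence (eqToIso hZF)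

/-- If `A` is a Schrödinger object for `C` and `F : C ⥤ D` is a monoidal equivalence, then
`Z(F)(A)` is a Schrödinger object for `D`, where `Z(F) : Z(C) ⥤ Z(D)` is the (braided monoidal)
equivalence induced by `F` on the Drinfel'd centers, i.e. the monoidal equivalence satisfying
`Π_D ∘ Z(F) = F ∘ Π_C`. -/
theorem isSchrodingerObject_of_monoidalEquivalence
    {D : Type u'} [Category.{v'} D] [MonoidalCategory D]
    (F : C ⥤ D) [F.Monoidal] [F.IsEquivalence]
    (ZF : Center C ⥤ Center D) [ZF.Monoidal] [ZF.IsEquivalence]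
    (hZF : ZF ⋙ Center.forget D = Center.forget C ⋙ F)
    (A : Center C) (hA : IsSchrodingerObject A) :
    IsSchrodingerObject (ZF.obj A) :=
  isSchrodingerObject_of_monoidalEquivalence_general F ZF hZF A hA
end

section
/- Let (C, c) be a left rigid braided monoidal category with chosen left duals, and let j_{X,Y}: Y* ⊗ X* → (X ⊗ Y)* denote the canonical isomorphism. Then for any morphism f: X ⊗ Y → X ⊗ Z, the right partial braided trace of j_{X,Y}^{-1} ∘ ᵗf ∘ j_{X,Z} on X* equals the left transpose of the left partial braided trace of f on X computed with respect to the mirror braiding c̄ (where c̄_{X,Y} := c_{Y,X}^{-1}). -/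
open CategoryTheory MonoidalCategory

variable {C : Type*} [Category C] [MonoidalCategory C] [BraidedCategory C]
variable [RightRigidCategory C]

/-- The left partial braided trace of `f : X ⊗ Y ⟶ X ⊗ Z` on `X`, computed with respect to the
*mirror* braiding `c̄` (where `c̄_{X,Y} = c_{Y,X}⁻¹`, so `c̄_{Xᘁ,X}⁻¹ = c_{X,Xᘁ}`). -/
noncomputable def lptraceMirror (X : C) [HasRightDual X] {Y Z : C} (f : X ⊗ Y ⟶ X ⊗ Z) :
    Y ⟶ Z :=
  (λ_ Y).inv ≫ (η_ X (Xᘁ) ▷ Y) ≫ ((β_ X (Xᘁ)).hom ▷ Y) ≫ (α_ (Xᘁ) X Y).hom ≫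
    ((Xᘁ) ◁ f) ≫ (α_ (Xᘁ) X Z).inv ≫ (ε_ X (Xᘁ) ▷ Z) ≫ (λ_ Z).hom

/-- The right partial braided trace of `g : Y ⊗ X ⟶ Z ⊗ X` on `X`:
`Y ≅ Y ⊗ 𝟙 → Y ⊗ (X ⊗ Xᘁ) → (Y ⊗ X) ⊗ Xᘁ → (Z ⊗ X) ⊗ Xᘁ → Z ⊗ (X ⊗ Xᘁ) →
Z ⊗ (Xᘁ ⊗ X) → Z ⊗ 𝟙 → Z`, using `c_{X,Xᘁ}`. -/
noncomputable def rptrace (X : C) [HasRightDual X] {Y Z : C} (g : Y ⊗ X ⟶ Z ⊗ X) : Y ⟶ Z :=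
  (ρ_ Y).inv ≫ (Y ◁ η_ X (Xᘁ)) ≫ (α_ Y X (Xᘁ)).inv ≫ (g ▷ (Xᘁ)) ≫ (α_ Z X (Xᘁ)).hom ≫
    (Z ◁ (β_ X (Xᘁ)).hom) ≫ (Z ◁ ε_ X (Xᘁ)) ≫ (ρ_ Z).hom

/-!
Both sides are tested against the evaluation `ε_Y`. The right trace on `Xᘁ` may be computed with
any left dual of `Xᘁ`: the comparison isomorphism between two left duals slides along the string
and is absorbed by the evaluation. Taking `X` itself as that left dual, with coevaluation
`η_X ≫ c_{X,Xᘁ}` and evaluation `ε_X`, the compatibility of `j_{X,Y}` and `j_{X,Z}` with the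
evaluations turns `fᘁ` back into `f`, and what is left is `ε_Z` applied to the mirror trace of `f`.
-/

section Monoidal

variable {C : Type*} [Category C] [MonoidalCategory C]

def rtraceWith {V D Y Z : C} (η : 𝟙_ C ⟶ V ⊗ D) (ε : V ⊗ D ⟶ 𝟙_ C) (g : Y ⊗ V ⟶ Z ⊗ V) :
    Y ⟶ Z :=
  (ρ_ Y).inv ≫ Y ◁ η ≫ (α_ Y V D).inv ≫ g ▷ D ≫ (α_ Z V D).hom ≫ Z ◁ ε ≫ (ρ_ Z).hom

theorem rtraceWith_comp_whiskerLeft {V D D' Y Z : C} (η : 𝟙_ C ⟶ V ⊗ D) (φ : D ⟶ D')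
    (ε : V ⊗ D' ⟶ 𝟙_ C) (g : Y ⊗ V ⟶ Z ⊗ V) :
    rtraceWith (η ≫ V ◁ φ) ε g = rtraceWith η (V ◁ φ ≫ ε) g := by
  simp only [rtraceWith, whiskerLeft_comp, Category.assoc]
  rw [associator_inv_naturality_right_assoc, whisker_exchange_assoc,
    associator_naturality_right_assoc]

theorem whiskerRight_comp_evaluation_injective {A Y : C} [HasRightDual Y] :
    Function.Injective fun a : A ⟶ Yᘁ => a ▷ Y ≫ ε_ Y Yᘁ := by
  intro a b h
  have := congrArg (tensorRightHomEquiv A Y Yᘁ (𝟙_ C)) h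
  simpa only [tensorRightHomEquiv_whiskerRight_comp_evaluation, cancel_mono] using this

theorem conj_rightAdjointMate_whiskerRight_comp_evaluation {M N M' N' : C} [HasRightDual M]
    [HasRightDual N] [ExactPairing M M'] [ExactPairing N N'] (f : M ⟶ N) (jM : M' ≅ Mᘁ)
    (jN : N' ≅ Nᘁ) (hjM : jM.hom ▷ M ≫ ε_ M Mᘁ = ε_ M M') (hjN : jN.hom ▷ N ≫ ε_ N Nᘁ = ε_ N N') :
    (jN.hom ≫ fᘁ ≫ jM.inv) ▷ M ≫ ε_ M M' = N' ◁ f ≫ ε_ N N' := by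
  rw [← hjM, ← hjN, ← comp_whiskerRight_assoc, Category.assoc, Category.assoc, Iso.inv_hom_id,
    Category.comp_id, comp_whiskerRight_assoc, rightAdjointMate_comp_evaluation,
    whisker_exchange_assoc]

theorem ExactPairing.tensor_evaluation_eq_comp {X₁ X₂ Y₁ Y₂ : C} [ExactPairing X₁ Y₁]
    [ExactPairing X₂ Y₂] :
    ε_ (X₁ ⊗ X₂) (Y₂ ⊗ Y₁) = (α_ Y₂ Y₁ (X₁ ⊗ X₂)).hom ≫ Y₂ ◁ (α_ Y₁ X₁ X₂).inv ≫
      Y₂ ◁ (ε_ X₁ Y₁ ▷ X₂) ≫ Y₂ ◁ (λ_ X₂).hom ≫ ε_ X₂ Y₂ := by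
  rw [ExactPairing.tensor_evaluation]
  monoidal

end Monoidal

section Braided

variable {C : Type*} [Category C] [MonoidalCategory C] [BraidedCategory C]

theorem rtraceWith_leftDual_congr {V D₁ D₂ Y Z : C} [p₁ : ExactPairing D₁ V]
    [p₂ : ExactPairing D₂ V] (g : Y ⊗ V ⟶ Z ⊗ V) :
    rtraceWith (η_ D₁ V ≫ (β_ D₁ V).hom) (ε_ D₁ V) g =
      rtraceWith (η_ D₂ V ≫ (β_ D₂ V).hom) (ε_ D₂ V) g := by
  have hη : η_ D₁ V ≫ (leftDualIso p₁ p₂).hom ▷ V = η_ D₂ V := by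
    have h := @coevaluation_comp_leftAdjointMate C _ _ V V ⟨D₂⟩ ⟨D₁⟩ (𝟙 V)
    rwa [whiskerLeft_id, Category.comp_id] at h
  have hε : V ◁ (leftDualIso p₁ p₂).hom ≫ ε_ D₂ V = ε_ D₁ V := by
    have h := @leftAdjointMate_comp_evaluation C _ _ V V ⟨D₂⟩ ⟨D₁⟩ (𝟙 V)
    rwa [id_whiskerRight, Category.id_comp] at h
  rw [← hε, ← rtraceWith_comp_whiskerLeft, Category.assoc,
    ← BraidedCategory.braiding_naturality_left, reassoc_of% hη]

theorem rptrace_eq_rtraceWith (X : C) [HasRightDual X] {Y Z : C} (g : Y ⊗ X ⟶ Z ⊗ X) :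
    rptrace X g = rtraceWith (η_ X Xᘁ) ((β_ X Xᘁ).hom ≫ ε_ X Xᘁ) g := by
  simp only [rptrace, rtraceWith, whiskerLeft_comp, Category.assoc]

theorem rptrace_rightDual_eq_rtraceWith (X : C) [HasRightDual X] [HasRightDual Xᘁ] {Y Z : C}
    (g : Y ⊗ Xᘁ ⟶ Z ⊗ Xᘁ) :
    rptrace Xᘁ g = rtraceWith (η_ X Xᘁ ≫ (β_ X Xᘁ).hom) (ε_ X Xᘁ) g := by
  rw [rptrace_eq_rtraceWith,
    rtraceWith_leftDual_congr (p₂ := BraidedCategory.exactPairing_swap Xᘁ Xᘁᘁ)]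
  show _ = rtraceWith ((η_ Xᘁ Xᘁᘁ ≫ (β_ Xᘁᘁ Xᘁ).inv) ≫ (β_ Xᘁᘁ Xᘁ).hom)
    ((β_ Xᘁ Xᘁᘁ).hom ≫ ε_ Xᘁ Xᘁᘁ) g
  rw [Category.assoc, Iso.inv_hom_id, Category.comp_id]

end Braided

/-- Lemma 4.4 of Shimizu–Wakui: for a morphism `f : X ⊗ Y ⟶ X ⊗ Z` in a left rigid braided
monoidal category `(C, c)`, with `j_{X,Y} : Yᘁ ⊗ Xᘁ ≅ (X ⊗ Y)ᘁ` the canonical isomorphisms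
(characterized by `e_{X⊗Y} ∘ (j_{X,Y} ⊗ id) = e_Y ∘ (id ⊗ e_X ⊗ id)`), the right partial
braided trace of `j_{X,Y}⁻¹ ∘ ᵗf ∘ j_{X,Z}` on `Xᘁ` equals the left transpose of the left
partial braided trace of `f` on `X` computed with respect to the mirror braiding `c̄`. -/
theorem rptrace_transpose {X Y Z : C} (f : X ⊗ Y ⟶ X ⊗ Z)
    (jXY : (Yᘁ : C) ⊗ (Xᘁ) ≅ ((X ⊗ Y)ᘁ))
    (hjXY : (jXY.hom ▷ (X ⊗ Y)) ≫ ε_ (X ⊗ Y) ((X ⊗ Y)ᘁ) =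
      (α_ (Yᘁ) (Xᘁ) (X ⊗ Y)).hom ≫ ((Yᘁ) ◁ (α_ (Xᘁ) X Y).inv) ≫
        ((Yᘁ) ◁ (ε_ X (Xᘁ) ▷ Y)) ≫ ((Yᘁ) ◁ (λ_ Y).hom) ≫ ε_ Y (Yᘁ))
    (jXZ : (Zᘁ : C) ⊗ (Xᘁ) ≅ ((X ⊗ Z)ᘁ))
    (hjXZ : (jXZ.hom ▷ (X ⊗ Z)) ≫ ε_ (X ⊗ Z) ((X ⊗ Z)ᘁ) =
      (α_ (Zᘁ) (Xᘁ) (X ⊗ Z)).hom ≫ ((Zᘁ) ◁ (α_ (Xᘁ) X Z).inv) ≫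
        ((Zᘁ) ◁ (ε_ X (Xᘁ) ▷ Z)) ≫ ((Zᘁ) ◁ (λ_ Z).hom) ≫ ε_ Z (Zᘁ)) :
    rptrace (Xᘁ) (jXZ.hom ≫ (f)ᘁ ≫ jXY.inv) = (lptraceMirror X f)ᘁ := by
  rw [← ExactPairing.tensor_evaluation_eq_comp] at hjXY hjXZ
  have hf := conj_rightAdjointMate_whiskerRight_comp_evaluation f jXY jXZ hjXY hjXZ
  refine whiskerRight_comp_evaluation_injective ?_
  dsimp only
  rw [rightAdjointMate_comp_evaluation, rptrace_rightDual_eq_rtraceWith]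
  calc _ = 𝟙 _ ⊗≫ (Zᘁ : C) ◁ ((η_ X Xᘁ ≫ (β_ X Xᘁ).hom) ▷ Y) ⊗≫
          ((jXZ.hom ≫ fᘁ ≫ jXY.inv) ▷ (X ⊗ Y) ≫ ε_ (X ⊗ Y) (Yᘁ ⊗ Xᘁ)) := by
        rw [ExactPairing.tensor_evaluation]
        simp only [rtraceWith]
        monoidal
    _ = 𝟙 _ ⊗≫ (Zᘁ : C) ◁ ((η_ X Xᘁ ≫ (β_ X Xᘁ).hom) ▷ Y) ⊗≫
          (((Zᘁ : C) ⊗ Xᘁ) ◁ f ≫ ε_ (X ⊗ Z) (Zᘁ ⊗ Xᘁ)) := by rw [hf]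
    _ = (Zᘁ : C) ◁ lptraceMirror X f ≫ ε_ Z Zᘁ := by
        rw [ExactPairing.tensor_evaluation]
        simp only [lptraceMirror]
        monoidal
end
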